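/- For every 0 ≤ p ≤ 4m, the following operator identity holds on the p-th exterior power Λ^pV: 4C = Σ_{α=1}^{3} Σ_{i<j} ρ(e_i∧e_j)∘ρ(J_αe_i∧J_αe_j) + 𝒦 + 6p·id, where 𝒦 := Σ_α 𝒥_α∘𝒥_α and C := Σ_α L_α∘Λ_α. -/

import Mathlib

/-!
Statement 6: on `p`-forms, `4C = Σ_α Σ_{i<j} ρ(eᵢ∧eⱼ)∘ρ(J_αeᵢ∧J_αeⱼ) + 𝒦 + 6p·id`,
where `𝒦 := Σ_α 𝒥_α∘𝒥_α` and `C := Σ_α L_α∘Λ_α`.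
-/

open ExteriorAlgebra
open scoped RealInnerProductSpace

variable {V : Type*} [NormedAddCommGroup V] [InnerProductSpace ℝ V]

/-- Exterior multiplication by the vector `X` on the exterior algebra `ΛV`. -/
noncomputable def wedgeOp (X : V) : ExteriorAlgebra ℝ V →ₗ[ℝ] ExteriorAlgebra ℝ V :=
  LinearMap.mulLeft ℝ (ExteriorAlgebra.ι ℝ X)

/-- Interior product (contraction) with the vector `X` on the exterior algebra `ΛV`,
the adjoint of `wedgeOp X` with respect to the inner product. -/
noncomputable def contractOp (X : V) : ExteriorAlgebra ℝ V →ₗ[ℝ] ExteriorAlgebra ℝ V :=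
  CliffordAlgebra.contractLeft (innerₗ V X)

/-- The operator `L_J := ½ Σᵢ (eᵢ∧)∘(Jeᵢ∧)` on `ΛV`. -/
noncomputable def Lop {n : ℕ} (e : OrthonormalBasis (Fin n) ℝ V) (J : V →ₗ[ℝ] V) :
    ExteriorAlgebra ℝ V →ₗ[ℝ] ExteriorAlgebra ℝ V :=
  (1 / 2 : ℝ) • ∑ i, (wedgeOp (e i)).comp (wedgeOp (J (e i)))

/-- The operator `Λ_J := −½ Σᵢ (eᵢ⌟)∘(Jeᵢ⌟)` on `ΛV`. -/
noncomputable def Lambdaop {n : ℕ} (e : OrthonormalBasis (Fin n) ℝ V) (J : V →ₗ[ℝ] V) :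
    ExteriorAlgebra ℝ V →ₗ[ℝ] ExteriorAlgebra ℝ V :=
  -((1 / 2 : ℝ) • ∑ i, (contractOp (e i)).comp (contractOp (J (e i))))

/-- The operator `𝒥_J := Σᵢ (Jeᵢ∧)∘(eᵢ⌟)` on `ΛV`. -/
noncomputable def Jop {n : ℕ} (e : OrthonormalBasis (Fin n) ℝ V) (J : V →ₗ[ℝ] V) :
    ExteriorAlgebra ℝ V →ₗ[ℝ] ExteriorAlgebra ℝ V :=
  ∑ i, (wedgeOp (J (e i))).comp (contractOp (e i))


/-- The standard action of the 2-vector `X∧Y ∈ Λ²V ≅ so(V)` on the exterior algebra: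
`ρ(X∧Y) = (Y∧)∘(X⌟) − (X∧)∘(Y⌟)`. -/
noncomputable def rho (X Y : V) : ExteriorAlgebra ℝ V →ₗ[ℝ] ExteriorAlgebra ℝ V :=
  (wedgeOp Y).comp (contractOp X) - (wedgeOp X).comp (contractOp Y)

noncomputable def wedgeL : V →ₗ[ℝ] Module.End ℝ (ExteriorAlgebra ℝ V) where
  toFun := wedgeOp
  map_add' x y := by ext ω; simp [wedgeOp, add_mul]
  map_smul' c x := by ext ω; simp [wedgeOp, smul_mul_assoc]

noncomputable def contractL : V →ₗ[ℝ] Module.End ℝ (ExteriorAlgebra ℝ V) :=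
  (CliffordAlgebra.contractLeft (Q := (0 : QuadraticForm ℝ V))).comp (innerₗ V)

@[simp] lemma wedgeL_apply (x : V) : wedgeL x = wedgeOp x := rfl
@[simp] lemma contractL_apply (x : V) : contractL x = contractOp x := rfl

lemma wedgeOp_neg (x : V) : (wedgeOp (-x) : Module.End ℝ (ExteriorAlgebra ℝ V)) = -wedgeOp x :=
  map_neg wedgeL x

lemma contractOp_neg (x : V) :
    (contractOp (-x) : Module.End ℝ (ExteriorAlgebra ℝ V)) = -contractOp x :=
  map_neg contractL x

lemma sum_inner_smul {n : ℕ} (e : OrthonormalBasis (Fin n) ℝ V) {W : Type*} [AddCommGroup W]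
    [Module ℝ W] (F : V →ₗ[ℝ] W) (v : V) : ∑ i, ⟪e i, v⟫ • F (e i) = F v := by
  simp_rw [← F.map_smul, ← map_sum, e.sum_repr']

lemma wedge_wedge (x y : V) :
    (wedgeOp x : Module.End ℝ (ExteriorAlgebra ℝ V)) * wedgeOp y = -(wedgeOp y * wedgeOp x) := by
  refine LinearMap.ext fun ω => ?_
  simp only [Module.End.mul_apply, wedgeOp, LinearMap.mulLeft_apply, LinearMap.neg_apply,
    ← mul_assoc]
  rw [eq_neg_of_add_eq_zero_left (ExteriorAlgebra.ι_add_mul_swap x y), neg_mul]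

lemma contract_contract (x y : V) :
    (contractOp x : Module.End ℝ (ExteriorAlgebra ℝ V)) * contractOp y
      = -(contractOp y * contractOp x) := by
  refine LinearMap.ext fun ω => ?_
  simp only [Module.End.mul_apply, LinearMap.neg_apply, contractOp]
  exact CliffordAlgebra.contractLeft_comm (Q := (0 : QuadraticForm ℝ V))
    (d := innerₗ V x) (d' := innerₗ V y) ω

lemma contract_wedge (x y : V) :
    (contractOp x : Module.End ℝ (ExteriorAlgebra ℝ V)) * wedgeOp y
      = ⟪x, y⟫ • 1 - wedgeOp y * contractOp x := by
  refine LinearMap.ext fun ω => ?_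
  simp [contractOp, wedgeOp, CliffordAlgebra.contractLeft_ι_mul]

section BasisLemmas

variable {n : ℕ} (e : OrthonormalBasis (Fin n) ℝ V)

/-- Generic commutation: `(Σᵢ a_{K eᵢ} b_{eᵢ}) ∘ a_v = a_{Kv} + a_v ∘ (Σᵢ a_{K eᵢ} b_{eᵢ})`. -/
lemma Kop_mul_wedge (K : V →ₗ[ℝ] V) (v : V) :
    (∑ i, wedgeOp (K (e i)) * contractOp (e i) : Module.End ℝ (ExteriorAlgebra ℝ V)) * wedgeOp v
      = wedgeOp (K v) + wedgeOp v * ∑ i, wedgeOp (K (e i)) * contractOp (e i) := by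
  rw [Finset.sum_mul]
  have h : ∀ i : Fin n,
      (wedgeOp (K (e i)) * contractOp (e i) : Module.End ℝ (ExteriorAlgebra ℝ V)) * wedgeOp v
      = ⟪e i, v⟫ • wedgeOp (K (e i)) + wedgeOp v * (wedgeOp (K (e i)) * contractOp (e i)) := by
    intro i
    rw [mul_assoc, contract_wedge, mul_sub, mul_smul_comm, mul_one, ← mul_assoc,
      wedge_wedge (K (e i)) v, neg_mul (α := Module.End ℝ (ExteriorAlgebra ℝ V)), sub_neg_eq_add, mul_assoc]
  simp_rw [h, Finset.sum_add_distrib, ← Finset.mul_sum]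
  congr 1
  simpa using sum_inner_smul e (wedgeL.comp K) v

/-- Generic expansion: `Σⱼ a_{K eⱼ} b_{J eⱼ} = -Σₖ a_{K J eₖ} b_{eₖ}` for skew `J`. -/
lemma sum_wedgeK_contractJ (J K : V →ₗ[ℝ] V) (hsk : ∀ v w : V, ⟪J v, w⟫ = -⟪v, J w⟫) :
    (∑ j, wedgeOp (K (e j)) * contractOp (J (e j)) : Module.End ℝ (ExteriorAlgebra ℝ V))
      = -∑ k, wedgeOp (K (J (e k))) * contractOp (e k) := by
  have h1 : ∀ j, (contractOp (J (e j)) : Module.End ℝ (ExteriorAlgebra ℝ V))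
      = ∑ k, ⟪e k, J (e j)⟫ • contractOp (e k) := fun j => by
    simpa using (sum_inner_smul e contractL (J (e j))).symm
  have h2 : ∀ k, (∑ j, ⟪e k, J (e j)⟫ • wedgeOp (K (e j)) :
      Module.End ℝ (ExteriorAlgebra ℝ V)) = -wedgeOp (K (J (e k))) := by
    intro k
    have hc : ∀ j, ⟪e k, J (e j)⟫ = -⟪e j, J (e k)⟫ := fun j => by
      rw [real_inner_comm, hsk]
    simp_rw [hc, neg_smul (M := Module.End ℝ (ExteriorAlgebra ℝ V)), Finset.sum_neg_distrib, neg_inj]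
    simpa using sum_inner_smul e (wedgeL.comp K) (J (e k))
  calc (∑ j, wedgeOp (K (e j)) * contractOp (J (e j)) :
        Module.End ℝ (ExteriorAlgebra ℝ V))
      = ∑ j, ∑ k, ⟪e k, J (e j)⟫ • (wedgeOp (K (e j)) * contractOp (e k)) := by
        simp_rw [h1, Finset.mul_sum, mul_smul_comm]
    _ = ∑ k, (∑ j, ⟪e k, J (e j)⟫ • wedgeOp (K (e j))) * contractOp (e k) := by
        rw [Finset.sum_comm]; simp_rw [Finset.sum_mul, smul_mul_assoc]
    _ = -∑ k, wedgeOp (K (J (e k))) * contractOp (e k) := by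
        simp_rw [h2, neg_mul (α := Module.End ℝ (ExteriorAlgebra ℝ V)), ← Finset.sum_neg_distrib]

end BasisLemmas

section MainComputation

variable {n : ℕ} (e : OrthonormalBasis (Fin n) ℝ V) (J : V →ₗ[ℝ] V)

lemma T1_eq (hJJ : ∀ v, J (J v) = -v) :
    (∑ j, ∑ i, (wedgeOp (e j) * contractOp (e i)) *
        (wedgeOp (J (e j)) * contractOp (J (e i))) :
        Module.End ℝ (ExteriorAlgebra ℝ V))
      = -(∑ i, wedgeOp (e i) * contractOp (e i))
        - (∑ i, wedgeOp (e i) * wedgeOp (J (e i)))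
          * (∑ i, contractOp (e i) * contractOp (J (e i))) := by
  have hterm : ∀ j i, ((wedgeOp (e j) * contractOp (e i)) *
      (wedgeOp (J (e j)) * contractOp (J (e i))) : Module.End ℝ (ExteriorAlgebra ℝ V))
      = ⟪e i, J (e j)⟫ • (wedgeOp (e j) * contractOp (J (e i)))
        - (wedgeOp (e j) * wedgeOp (J (e j))) * (contractOp (e i) * contractOp (J (e i))) := by
    intro j i
    calc ((wedgeOp (e j) * contractOp (e i)) *
        (wedgeOp (J (e j)) * contractOp (J (e i))) : Module.End ℝ (ExteriorAlgebra ℝ V))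
        = wedgeOp (e j) * ((contractOp (e i) * wedgeOp (J (e j))) * contractOp (J (e i))) := by
          noncomm_ring
      _ = wedgeOp (e j) * (((⟪e i, J (e j)⟫ • 1 - wedgeOp (J (e j)) * contractOp (e i)))
            * contractOp (J (e i))) := by rw [contract_wedge]
      _ = ⟪e i, J (e j)⟫ • (wedgeOp (e j) * contractOp (J (e i)))
          - (wedgeOp (e j) * wedgeOp (J (e j))) * (contractOp (e i) * contractOp (J (e i))) := by
          simp only [sub_mul, smul_mul_assoc, one_mul, mul_sub, mul_smul_comm]
          noncomm_ring
  simp_rw [hterm, Finset.sum_sub_distrib]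
  congr 1
  · -- ∑ j, ∑ i, ⟪e i, J (e j)⟫ • (a_j * b_{J e i}) = -N
    have hinner : ∀ j, (∑ i, ⟪e i, J (e j)⟫ • (wedgeOp (e j) * contractOp (J (e i))) :
        Module.End ℝ (ExteriorAlgebra ℝ V)) = -(wedgeOp (e j) * contractOp (e j)) := by
      intro j
      have : (∑ i, ⟪e i, J (e j)⟫ • contractOp (J (e i)) :
          Module.End ℝ (ExteriorAlgebra ℝ V)) = contractOp (J (J (e j))) := by
        simpa using sum_inner_smul e (contractL.comp J) (J (e j))
      calc (∑ i, ⟪e i, J (e j)⟫ • (wedgeOp (e j) * contractOp (J (e i))) :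
          Module.End ℝ (ExteriorAlgebra ℝ V))
          = wedgeOp (e j) * ∑ i, ⟪e i, J (e j)⟫ • contractOp (J (e i)) := by
            rw [Finset.mul_sum]; simp_rw [mul_smul_comm]
        _ = -(wedgeOp (e j) * contractOp (e j)) := by
            rw [this, hJJ, contractOp_neg, mul_neg (α := Module.End ℝ (ExteriorAlgebra ℝ V))]
    simp_rw [hinner, Finset.sum_neg_distrib]
  · -- ∑ j, ∑ i, (a_j a_{Jj}) * (b_i b_{Ji}) = A * B
    rw [Finset.sum_mul_sum]

lemma T1'_eq (hJJ : ∀ v, J (J v) = -v) (hsk : ∀ v w : V, ⟪J v, w⟫ = -⟪v, J w⟫) :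
    (∑ j, ∑ i, (wedgeOp (e j) * contractOp (e i)) *
        (wedgeOp (J (e i)) * contractOp (J (e j))) :
        Module.End ℝ (ExteriorAlgebra ℝ V))
      = (∑ i, wedgeOp (J (e i)) * contractOp (e i))
          * (∑ i, wedgeOp (J (e i)) * contractOp (e i))
        + ∑ i, wedgeOp (e i) * contractOp (e i) := by
  have hdiag : ∀ i, ⟪e i, J (e i)⟫ = (0 : ℝ) := by
    intro i
    have h := hsk (e i) (e i)
    have h2 : ⟪J (e i), e i⟫ = ⟪e i, J (e i)⟫ := real_inner_comm _ _
    linarith [h, h2]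
  have hterm : ∀ j i, ((wedgeOp (e j) * contractOp (e i)) *
      (wedgeOp (J (e i)) * contractOp (J (e j))) : Module.End ℝ (ExteriorAlgebra ℝ V))
      = -(wedgeOp (e j) * ((wedgeOp (J (e i)) * contractOp (e i)) * contractOp (J (e j)))) := by
    intro j i
    calc ((wedgeOp (e j) * contractOp (e i)) *
        (wedgeOp (J (e i)) * contractOp (J (e j))) : Module.End ℝ (ExteriorAlgebra ℝ V))
        = wedgeOp (e j) * ((contractOp (e i) * wedgeOp (J (e i))) * contractOp (J (e j))) := by
          noncomm_ring
      _ = wedgeOp (e j) * (((⟪e i, J (e i)⟫ • 1 - wedgeOp (J (e i)) * contractOp (e i)))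
            * contractOp (J (e j))) := by rw [contract_wedge]
      _ = -(wedgeOp (e j) * ((wedgeOp (J (e i)) * contractOp (e i)) * contractOp (J (e j)))) := by
          rw [hdiag i, zero_smul, zero_sub, neg_mul (α := Module.End ℝ (ExteriorAlgebra ℝ V)), mul_neg (α := Module.End ℝ (ExteriorAlgebra ℝ V))]
  simp_rw [hterm, Finset.sum_neg_distrib]
  -- inner sum over i: a_j * 𝒥 * b_{Jj}
  have hjj : ∀ j, (∑ i, wedgeOp (e j) * ((wedgeOp (J (e i)) * contractOp (e i))
      * contractOp (J (e j))) : Module.End ℝ (ExteriorAlgebra ℝ V))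
      = (wedgeOp (e j) * (∑ i, wedgeOp (J (e i)) * contractOp (e i))) * contractOp (J (e j)) := by
    intro j
    rw [Finset.mul_sum, Finset.sum_mul]
    exact Finset.sum_congr rfl fun i _ => by noncomm_ring
  simp_rw [hjj]
  -- a_j * 𝒥 = 𝒥 * a_j - a_{Jj}
  have hcomm : ∀ j, (wedgeOp (e j) * (∑ i, wedgeOp (J (e i)) * contractOp (e i)) :
      Module.End ℝ (ExteriorAlgebra ℝ V))
      = (∑ i, wedgeOp (J (e i)) * contractOp (e i)) * wedgeOp (e j) - wedgeOp (J (e j)) := by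
    intro j
    rw [Kop_mul_wedge e J (e j)]
    abel
  simp_rw [hcomm, sub_mul, Finset.sum_sub_distrib]
  have hK1 : (∑ j, ((∑ i, wedgeOp (J (e i)) * contractOp (e i)) * wedgeOp (e j))
      * contractOp (J (e j)) : Module.End ℝ (ExteriorAlgebra ℝ V))
      = -((∑ i, wedgeOp (J (e i)) * contractOp (e i))
        * (∑ i, wedgeOp (J (e i)) * contractOp (e i))) := by
    have h1 : (∑ j, wedgeOp (LinearMap.id (R := ℝ) (e j)) * contractOp (J (e j)) :
        Module.End ℝ (ExteriorAlgebra ℝ V))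
        = -∑ k, wedgeOp (LinearMap.id (R := ℝ) (J (e k))) * contractOp (e k) :=
      sum_wedgeK_contractJ e J LinearMap.id hsk
    simp only [LinearMap.id_coe, id_eq] at h1
    calc (∑ j, ((∑ i, wedgeOp (J (e i)) * contractOp (e i)) * wedgeOp (e j))
        * contractOp (J (e j)) : Module.End ℝ (ExteriorAlgebra ℝ V))
        = (∑ i, wedgeOp (J (e i)) * contractOp (e i))
          * ∑ j, wedgeOp (e j) * contractOp (J (e j)) := by
          rw [Finset.mul_sum]
          exact Finset.sum_congr rfl fun j _ => by noncomm_ring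
      _ = -((∑ i, wedgeOp (J (e i)) * contractOp (e i))
          * (∑ i, wedgeOp (J (e i)) * contractOp (e i))) := by rw [h1, mul_neg (α := Module.End ℝ (ExteriorAlgebra ℝ V))]
  have hK2 : (∑ j, wedgeOp (J (e j)) * contractOp (J (e j)) :
      Module.End ℝ (ExteriorAlgebra ℝ V)) = ∑ i, wedgeOp (e i) * contractOp (e i) := by
    have h1 := sum_wedgeK_contractJ e J J hsk
    rw [h1]
    rw [neg_eq_iff_eq_neg, ← Finset.sum_neg_distrib]
    exact Finset.sum_congr rfl fun k _ => by
      rw [hJJ, wedgeOp_neg, neg_mul (α := Module.End ℝ (ExteriorAlgebra ℝ V))]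
  rw [hK1, hK2]
  abel

end MainComputation

section RhoSection

variable {n : ℕ} (e : OrthonormalBasis (Fin n) ℝ V) (J : V →ₗ[ℝ] V)

lemma rho_eq_mul (x y : V) :
    rho x y = (wedgeOp y * contractOp x : Module.End ℝ (ExteriorAlgebra ℝ V))
      - wedgeOp x * contractOp y := rfl

lemma rho_swap (x y : V) : rho y x = -(rho x y : Module.End ℝ (ExteriorAlgebra ℝ V)) := by
  rw [rho_eq_mul, rho_eq_mul, neg_sub]

lemma rho_same (x : V) : (rho x x : Module.End ℝ (ExteriorAlgebra ℝ V)) = 0 := by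
  rw [rho_eq_mul, sub_self]

lemma rho_sum_eq (hJJ : ∀ v, J (J v) = -v) (hsk : ∀ v w : V, ⟪J v, w⟫ = -⟪v, J w⟫) :
    (∑ i, ∑ j ∈ Finset.Ioi i, rho (e i) (e j) * rho (J (e i)) (J (e j)) :
        Module.End ℝ (ExteriorAlgebra ℝ V))
      = -((∑ i, wedgeOp (e i) * wedgeOp (J (e i)))
            * (∑ i, contractOp (e i) * contractOp (J (e i))))
        - (∑ i, wedgeOp (J (e i)) * contractOp (e i))
            * (∑ i, wedgeOp (J (e i)) * contractOp (e i))
        - (2 : ℝ) • (∑ i, wedgeOp (e i) * contractOp (e i)) := by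
  set f : Fin n → Fin n → Module.End ℝ (ExteriorAlgebra ℝ V) :=
    fun i j => rho (e i) (e j) * rho (J (e i)) (J (e j)) with hf
  have hsymm : ∀ i j, f j i = f i j := by
    intro i j
    simp only [hf]
    rw [rho_swap (e i) (e j), rho_swap (J (e i)) (J (e j)), neg_mul_neg (α := Module.End ℝ (ExteriorAlgebra ℝ V))]
  have hdiag : ∀ i, f i i = 0 := fun i => by simp only [hf, rho_same, zero_mul]
  have key := Finset.sum_sum_Ioi_add_eq_sum_sum_off_diag f
  have key2 : (∑ i, ∑ j ∈ Finset.Ioi i, f i j) + (∑ i, ∑ j ∈ Finset.Ioi i, f i j)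
      = ∑ i, ∑ j, f j i := by
    have h1 : (∑ i, ∑ j ∈ Finset.Ioi i, f i j) + (∑ i, ∑ j ∈ Finset.Ioi i, f i j)
        = ∑ i, ∑ j ∈ Finset.Ioi i, (f j i + f i j) := by
      rw [← Finset.sum_add_distrib]
      refine Finset.sum_congr rfl fun i _ => ?_
      rw [← Finset.sum_add_distrib]
      exact Finset.sum_congr rfl fun j _ => by rw [hsymm]
    rw [h1, key]
    refine Finset.sum_congr rfl fun i _ => ?_
    refine Finset.sum_subset (Finset.subset_univ _) fun x _ hx => ?_
    have hxi : x = i := by simpa using hx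
    rw [hxi]
    exact hdiag i
  -- expand the full double sum
  have hexp : (∑ i, ∑ j, f j i : Module.End ℝ (ExteriorAlgebra ℝ V))
      = ((∑ j, ∑ i, (wedgeOp (e j) * contractOp (e i)) *
            (wedgeOp (J (e j)) * contractOp (J (e i))))
          - (∑ j, ∑ i, (wedgeOp (e j) * contractOp (e i)) *
            (wedgeOp (J (e i)) * contractOp (J (e j)))))
        - ((∑ j, ∑ i, (wedgeOp (e j) * contractOp (e i)) *
            (wedgeOp (J (e i)) * contractOp (J (e j))))
          - (∑ j, ∑ i, (wedgeOp (e j) * contractOp (e i)) *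
            (wedgeOp (J (e j)) * contractOp (J (e i))))) := by
    rw [Finset.sum_comm]
    have : ∀ i j, f i j
        = (((wedgeOp (e j) * contractOp (e i)) * (wedgeOp (J (e j)) * contractOp (J (e i))))
            - ((wedgeOp (e j) * contractOp (e i)) * (wedgeOp (J (e i)) * contractOp (J (e j)))))
          - (((wedgeOp (e i) * contractOp (e j)) * (wedgeOp (J (e j)) * contractOp (J (e i))))
            - ((wedgeOp (e i) * contractOp (e j)) * (wedgeOp (J (e i)) * contractOp (J (e j))))) := by
      intro i j
      simp only [hf, rho_eq_mul]
      rw [sub_mul, mul_sub, mul_sub]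
    simp_rw [this, Finset.sum_sub_distrib]
    congr 1
    exact congrArg₂ (fun a b => a - b) Finset.sum_comm Finset.sum_comm
  rw [T1_eq e J hJJ, T1'_eq e J hJJ hsk] at hexp
  have h2 : (2 : ℝ) • (∑ i, ∑ j ∈ Finset.Ioi i, f i j)
      = (2 : ℝ) • (-((∑ i, wedgeOp (e i) * wedgeOp (J (e i)))
            * (∑ i, contractOp (e i) * contractOp (J (e i))))
        - (∑ i, wedgeOp (J (e i)) * contractOp (e i))
            * (∑ i, wedgeOp (J (e i)) * contractOp (e i))
        - (2 : ℝ) • (∑ i, wedgeOp (e i) * contractOp (e i))) := by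
    rw [two_smul, two_smul, key2, hexp]
    module
  exact smul_right_injective _ two_ne_zero h2

end RhoSection

lemma Nop_apply_pforms {n : ℕ} (e : OrthonormalBasis (Fin n) ℝ V) {p : ℕ}
    {ω : ExteriorAlgebra ℝ V} (hω : ω ∈ ⋀[ℝ]^p V) :
    (∑ i, wedgeOp (e i) * contractOp (e i) : Module.End ℝ (ExteriorAlgebra ℝ V)) ω
      = (p : ℝ) • ω := by
  refine Submodule.pow_induction_on_left'
    (M := LinearMap.range (ι ℝ : V →ₗ[ℝ] ExteriorAlgebra ℝ V))
    (C := fun k x _ =>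
      (∑ i, wedgeOp (e i) * contractOp (e i) : Module.End ℝ (ExteriorAlgebra ℝ V)) x
        = (k : ℝ) • x) ?_ ?_ ?_ hω
  · intro r
    simp [LinearMap.sum_apply, Module.End.mul_apply, contractOp,
      CliffordAlgebra.contractLeft_algebraMap]
  · intro x y k _ _ ihx ihy
    simp only [map_add, ihx, ihy, smul_add]
  · intro m hm k x _ ih
    obtain ⟨v, rfl⟩ := hm
    have hop := Kop_mul_wedge e (LinearMap.id (R := ℝ) (M := V)) v
    simp only [LinearMap.id_coe, id_eq] at hop
    have h2 := LinearMap.congr_fun hop x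
    simp only [Module.End.mul_apply, LinearMap.add_apply] at h2
    have hwx : ((ι ℝ) v * x) = wedgeOp v x := rfl
    rw [hwx, h2, ih, map_smul]
    push_cast
    rw [add_smul, one_smul]
    abel

theorem four_C_identity_on_p_forms
    [FiniteDimensional ℝ V] {m : ℕ} (hm : 1 ≤ m) (hdim : Module.finrank ℝ V = 4 * m)
    (e : OrthonormalBasis (Fin (4 * m)) ℝ V) (J : Fin 3 → V →ₗ[ℝ] V)
    (hJ2 : ∀ α, (J α).comp (J α) = -LinearMap.id)
    (hJiso : ∀ α, ∀ v w : V, ⟪J α v, J α w⟫ = ⟪v, w⟫)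
    (hJ12 : (J 0).comp (J 1) = J 2) (hJ21 : (J 1).comp (J 0) = -(J 2))
    {p : ℕ} (hp : p ≤ 4 * m) :
    ∀ ω ∈ ⋀[ℝ]^p V,
      (4 : ℝ) • (∑ α, (Lop e (J α)).comp (Lambdaop e (J α))) ω
        = (∑ α : Fin 3, ∑ i, ∑ j ∈ Finset.Ioi i,
            rho (e i) (e j) (rho (J α (e i)) (J α (e j)) ω))
          + (∑ α, (Jop e (J α)).comp (Jop e (J α))) ω
          + ((6 : ℝ) * (p : ℝ)) • ω := by
  intro ω hω
  have hJJ : ∀ α v, J α (J α v) = -v := by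
    intro α v
    have := LinearMap.congr_fun (hJ2 α) v
    simpa using this
  have hsk : ∀ α (v w : V), ⟪J α v, w⟫ = -⟪v, J α w⟫ := by
    intro α v w
    have h1 : ⟪J α v, J α (J α w)⟫ = ⟪v, J α w⟫ := hJiso α v (J α w)
    rw [hJJ α w, inner_neg_right] at h1
    linarith
  have hN := Nop_apply_pforms e hω
  have main : ∀ α : Fin 3,
      (∑ i, ∑ j ∈ Finset.Ioi i, rho (e i) (e j) * rho (J α (e i)) (J α (e j)) :
        Module.End ℝ (ExteriorAlgebra ℝ V))
      = -((∑ i, wedgeOp (e i) * wedgeOp (J α (e i)))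
            * (∑ i, contractOp (e i) * contractOp (J α (e i))))
        - (∑ i, wedgeOp (J α (e i)) * contractOp (e i))
            * (∑ i, wedgeOp (J α (e i)) * contractOp (e i))
        - (2 : ℝ) • (∑ i, wedgeOp (e i) * contractOp (e i)) :=
    fun α => rho_sum_eq e (J α) (hJJ α) (hsk α)
  have hJop : ∀ α : Fin 3, (Jop e (J α)).comp (Jop e (J α))
      = (∑ i, wedgeOp (J α (e i)) * contractOp (e i))
          * (∑ i, wedgeOp (J α (e i)) * contractOp (e i)) := fun _ => rfl
  have hLL : ∀ α : Fin 3, (Lop e (J α)).comp (Lambdaop e (J α))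
      = -((1 / 4 : ℝ) • ((∑ i, wedgeOp (e i) * wedgeOp (J α (e i)))
            * (∑ i, contractOp (e i) * contractOp (J α (e i))))) := by
    intro α
    have : (Lop e (J α)).comp (Lambdaop e (J α))
        = ((1 / 2 : ℝ) • (∑ i, wedgeOp (e i) * wedgeOp (J α (e i)) :
            Module.End ℝ (ExteriorAlgebra ℝ V)))
          * (-((1 / 2 : ℝ) • (∑ i, contractOp (e i) * contractOp (J α (e i))))) := rfl
    rw [this, mul_neg (α := Module.End ℝ (ExteriorAlgebra ℝ V)), smul_mul_assoc, mul_smul_comm, smul_smul]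
    norm_num
  have OPID : (4 : ℝ) • (∑ α : Fin 3, (Lop e (J α)).comp (Lambdaop e (J α)))
      = (∑ α : Fin 3, ∑ i, ∑ j ∈ Finset.Ioi i,
            rho (e i) (e j) * rho (J α (e i)) (J α (e j)) :
          Module.End ℝ (ExteriorAlgebra ℝ V))
        + (∑ α : Fin 3, (Jop e (J α)).comp (Jop e (J α)))
        + (6 : ℝ) • (∑ i, wedgeOp (e i) * contractOp (e i)) := by
    simp only [hLL, hJop, main, Fin.sum_univ_three]
    module
  have happly : (∑ α : Fin 3, ∑ i, ∑ j ∈ Finset.Ioi i,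
        rho (e i) (e j) (rho (J α (e i)) (J α (e j)) ω))
      = (∑ α : Fin 3, ∑ i, ∑ j ∈ Finset.Ioi i,
          rho (e i) (e j) * rho (J α (e i)) (J α (e j)) :
          Module.End ℝ (ExteriorAlgebra ℝ V)) ω := by
    simp [LinearMap.sum_apply, Module.End.mul_apply]
  rw [happly]
  have h := LinearMap.congr_fun OPID ω
  simp only [LinearMap.add_apply, LinearMap.smul_apply] at h ⊢
  rw [h, hN, smul_smul]
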